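/- The local marginal polytope relaxation is not tight on cycles: fix K ≥ 3, let the graph be the K-cycle with vertices 0,…,K−1 and edges (k, k+1 mod K), let y_0,…,y_{2K−1} be 2K equally spaced points on the unit circle S^1 ordered so that d_g(y_j, y_{j+1}) = π/K (indices mod 2K), let the unary terms be the indicator functions f_k = ι_{{y_k, y_{k+K}}} and the couplings be the geodesic distance d_g. Then (a) the minimum of F_K(x) = Σ_{k=0}^{K−1} ι_{{y_k,y_{k+K}}}(x_k) + Σ_{k=0}^{K−1} d_g(x_k, x_{k+1}) over x ∈ (S^1)^V equals 2π(K−1)/K, attained at x* = (y_0, y_1, …, y_{K−1}); and (b) the family μ*_k = (δ_{y_k} + δ_{y_{k+K}})/2 is feasible for the local marginal polytope relaxation with cost at most π < 2π(K−1)/K, so the relaxation is strictly below the minimum of the original problem. -/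

import Mathlib

open MeasureTheory
open scoped RealInnerProductSpace ENNReal

/-- The point `(cos θ, sin θ)` on the unit circle `S^1 ⊆ ℝ²`. -/
noncomputable def circlePt (θ : ℝ) : Metric.sphere (0 : EuclideanSpace ℝ (Fin 2)) 1 :=
  ⟨(WithLp.equiv 2 (Fin 2 → ℝ)).symm ![Real.cos θ, Real.sin θ], by
    rw [mem_sphere_zero_iff_norm, EuclideanSpace.norm_eq]
    simp [Fin.sum_univ_two, Real.norm_eq_abs, sq_abs, Real.sin_sq_add_cos_sq]⟩

/-- Geodesic distance on the unit circle: `d_g(x, y) = arccos ⟨x, y⟩`. -/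
noncomputable def geodC (x y : Metric.sphere (0 : EuclideanSpace ℝ (Fin 2)) 1) : ℝ :=
  Real.arccos ⟪(x : EuclideanSpace ℝ (Fin 2)), (y : EuclideanSpace ℝ (Fin 2))⟫

/-- `2K` equally spaced points on the unit circle: `y_j = (cos (jπ/K), sin (jπ/K))`,
indexed mod `2K`, so that `d_g(y_j, y_{j+1}) = π/K`. -/
noncomputable def ypt (K : ℕ) (j : ZMod (2 * K)) :
    Metric.sphere (0 : EuclideanSpace ℝ (Fin 2)) 1 :=
  circlePt ((j.val : ℝ) * Real.pi / K)

/-- The embedding of the vertex indices mod `K` into the point indices mod `2K`. -/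
def emb (K : ℕ) (k : ZMod K) : ZMod (2 * K) := (k.val : ZMod (2 * K))

/-- Optimal transport cost between two measures with cost `c`. -/
noncomputable def OTcost {Ω : Type*} [MeasurableSpace Ω]
    (c : Ω → Ω → ℝ) (μ ν : Measure Ω) : ℝ :=
  sInf {r : ℝ | ∃ π : Measure (Ω × Ω), IsProbabilityMeasure π ∧
    π.map Prod.fst = μ ∧ π.map Prod.snd = ν ∧ r = ∫ p, c p.1 p.2 ∂π}

/-- The measures `μ*_k = (δ_{y_k} + δ_{y_{k+K}})/2`. -/
noncomputable def mustar (K : ℕ) (k : ZMod K) :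
    Measure (Metric.sphere (0 : EuclideanSpace ℝ (Fin 2)) 1) :=
  (1 / 2 : ℝ≥0∞) • (Measure.dirac (ypt K (emb K k)) +
    Measure.dirac (ypt K (emb K k + (K : ZMod (2 * K)))))

/-!
Write a configuration as `x_k = y_{A k}`; admissibility says exactly that `A k ≡ k (mod K)`
for labels `A k ∈ ZMod (2K)`. Consecutive labels then differ by `1` (cost `π/K`) or by `1 + K`
(the antipode of the neighbour, cost `(K-1)π/K`). The `K` differences telescope to `0` in
`ZMod (2K)`, so they are not all `1`: every configuration costs at least
`(K-1)π/K + (K-1)·π/K = 2π(K-1)/K`, and `x*`, whose only long step is the wrap-around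
`K-1 → 0`, costs exactly that. In the relaxation, moving `y_k ↦ y_{k+1}` and
`y_{k+K} ↦ y_{k+K+1}` couples `μ*_k` with `μ*_{k+1}` at cost `π/K`, so the cycle costs at most `π`.
-/

open Real

lemma inner_circlePt (θ φ : ℝ) :
    ⟪(circlePt θ : EuclideanSpace ℝ (Fin 2)), circlePt φ⟫ = cos (φ - θ) := by
  simp [circlePt, PiLp.inner_apply, Fin.sum_univ_two, cos_sub, RCLike.inner_apply]

lemma geodC_circlePt (θ φ : ℝ) : geodC (circlePt θ) (circlePt φ) = arccos (cos (φ - θ)) := by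
  rw [geodC, inner_circlePt]

section Sums

variable {ι M : Type*} [Fintype ι] [DecidableEq ι]

lemma Fintype.sum_eq_add_card_sub_one_nsmul [AddCommMonoid M] {f : ι → M} (i₀ : ι) {c : M}
    (h : ∀ i ≠ i₀, f i = c) : ∑ i, f i = f i₀ + (Fintype.card ι - 1) • c := by
  have hc : ∀ i ∈ ({i₀}ᶜ : Finset ι), f i = c := fun i hi => h i (by simpa using hi)
  rw [Fintype.sum_eq_add_sum_compl i₀, Finset.sum_congr rfl hc, Finset.sum_const,
    Finset.card_compl, Finset.card_singleton]

lemma Fintype.add_card_sub_one_nsmul_le_sum [AddCommMonoid M] [PartialOrder M]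
    [IsOrderedAddMonoid M] {f : ι → M} (i₀ : ι) {c : M} (h : ∀ i ≠ i₀, c ≤ f i) :
    f i₀ + (Fintype.card ι - 1) • c ≤ ∑ i, f i := by
  have hc : ∀ i ∈ ({i₀}ᶜ : Finset ι), c ≤ f i := fun i hi => h i (by simpa using hi)
  rw [Fintype.sum_eq_add_sum_compl i₀, ← Finset.card_singleton i₀, ← Finset.card_compl]
  exact add_le_add_right (Finset.card_nsmul_le_sum _ _ _ hc) _

end Sums

section HalfDirac

variable {Ω : Type*} [MeasurableSpace Ω]

lemma isProbabilityMeasure_half_smul_dirac_add (u v : Ω) :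
    IsProbabilityMeasure ((1 / 2 : ℝ≥0∞) • (Measure.dirac u + Measure.dirac v)) := by
  constructor
  rw [Measure.smul_apply, Measure.add_apply, measure_univ, measure_univ, smul_eq_mul,
    one_add_one_eq_two, one_div, ENNReal.inv_mul_cancel two_ne_zero ENNReal.ofNat_ne_top]

lemma half_smul_dirac_add_apply_of_mem {u v : Ω} {s : Set Ω} (hu : u ∈ s) (hv : v ∈ s) :
    ((1 / 2 : ℝ≥0∞) • (Measure.dirac u + Measure.dirac v)) s = 1 := by
  rw [Measure.smul_apply, Measure.add_apply, Measure.dirac_apply_of_mem hu,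
    Measure.dirac_apply_of_mem hv, smul_eq_mul, one_add_one_eq_two, one_div,
    ENNReal.inv_mul_cancel two_ne_zero ENNReal.ofNat_ne_top]

lemma OTcost_half_smul_dirac_add_le [MeasurableSingletonClass Ω] {c : Ω → Ω → ℝ}
    (hc : ∀ x y, 0 ≤ c x y) (u v u' v' : Ω) :
    OTcost c ((1 / 2 : ℝ≥0∞) • (Measure.dirac u + Measure.dirac v))
      ((1 / 2 : ℝ≥0∞) • (Measure.dirac u' + Measure.dirac v')) ≤ (c u u' + c v v') / 2 := by
  refine csInf_le ⟨0, ?_⟩ ⟨(1 / 2 : ℝ≥0∞) • (Measure.dirac (u, u') + Measure.dirac (v, v')),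
    isProbabilityMeasure_half_smul_dirac_add _ _, ?_, ?_, ?_⟩
  · rintro r ⟨γ, -, -, -, rfl⟩
    exact integral_nonneg fun p => hc p.1 p.2
  · rw [Measure.map_smul, Measure.map_add _ _ measurable_fst, Measure.map_dirac' measurable_fst,
      Measure.map_dirac' measurable_fst]
  · rw [Measure.map_smul, Measure.map_add _ _ measurable_snd, Measure.map_dirac' measurable_snd,
      Measure.map_dirac' measurable_snd]
  · rw [integral_smul_measure, integral_add_measure (integrable_dirac enorm_lt_top)
      (integrable_dirac enorm_lt_top), integral_dirac, integral_dirac, smul_eq_mul]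
    simp only [one_div, ENNReal.toReal_inv, ENNReal.toReal_ofNat]
    ring

end HalfDirac

section Cycle

variable {K : ℕ}

local notation "ρ" => ZMod.castHom (dvd_mul_left K 2) (ZMod K)

lemma castHom_natCast_self : ρ (K : ZMod (2 * K)) = 0 := by
  rw [map_natCast, ZMod.natCast_self]

lemma eq_one_or_eq_one_add_of_castHom_eq_one (hK : 2 ≤ K) {d : ZMod (2 * K)} (hd : ρ d = 1) :
    d = 1 ∨ d = 1 + K := by
  have : NeZero K := ⟨by omega⟩
  rw [← ZMod.natCast_zmod_val d, map_natCast, ← Nat.cast_one, ZMod.natCast_eq_natCast_iff',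
    Nat.mod_eq_of_lt (by omega : 1 < K)] at hd
  have hq : d.val / K < 2 := (Nat.div_lt_iff_lt_mul (by omega)).mpr (ZMod.val_lt d)
  have hsplit := Nat.mod_add_div d.val K
  rw [← ZMod.natCast_zmod_val d]
  interval_cases d.val / K
  · left; rw [← hsplit, hd]; simp
  · right; rw [← hsplit, hd]; push_cast; ring

lemma sub_eq_one_or_eq_one_add (hK : 2 ≤ K) {A : ZMod K → ZMod (2 * K)} (hA : ∀ k, ρ (A k) = k)
    (k : ZMod K) : A (k + 1) - A k = 1 ∨ A (k + 1) - A k = 1 + K :=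
  eq_one_or_eq_one_add_of_castHom_eq_one hK (by rw [map_sub, hA, hA, add_sub_cancel_left])

lemma natCast_add_natCast_self_zmod_two_mul : (K : ZMod (2 * K)) + K = 0 := by
  rw [← two_mul]
  exact_mod_cast ZMod.natCast_self (2 * K)

variable [NeZero K]

lemma geodC_ypt_add (a d : ZMod (2 * K)) :
    geodC (ypt K a) (ypt K (a + d)) = arccos (cos (d.val * π / K)) := by
  have hK : (K : ℝ) ≠ 0 := NeZero.ne _
  set q := (a.val + d.val) / (2 * K)
  have hval : (((a + d).val : ℕ) : ℝ) = a.val + d.val - q * (2 * K) := by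
    rw [ZMod.val_add, eq_sub_iff_add_eq]
    exact_mod_cast Nat.mod_add_div' (a.val + d.val) (2 * K)
  rw [ypt, ypt, geodC_circlePt, hval,
    show (a.val + d.val - q * (2 * K)) * π / K - a.val * π / K = d.val * π / K - q * (2 * π) by
      field_simp; ring,
    cos_sub_nat_mul_two_pi]

lemma geodC_ypt_add_one (a : ZMod (2 * K)) : geodC (ypt K a) (ypt K (a + 1)) = π / K := by
  have hK : (1 : ℝ) ≤ K := by exact_mod_cast NeZero.one_le
  have h1 : (1 : ZMod (2 * K)).val = 1 := by
    rw [ZMod.val_one_eq_one_mod, Nat.mod_eq_of_lt (by have := NeZero.ne K; omega)]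
  rw [geodC_ypt_add, h1, Nat.cast_one, one_mul,
    arccos_cos (by positivity) (div_le_self pi_nonneg hK)]

lemma geodC_ypt_add_one_add (hK : 2 ≤ K) (a : ZMod (2 * K)) :
    geodC (ypt K a) (ypt K (a + (1 + K))) = (K - 1) * π / K := by
  have hKpos : (0 : ℝ) < K := by exact_mod_cast (by omega : 0 < K)
  have hval : ((1 + K : ZMod (2 * K))).val = 1 + K := by
    rw [← Nat.cast_one, ← Nat.cast_add, ZMod.val_cast_of_lt (by omega)]
  have hcos : cos ((1 + K : ℕ) * π / K) = cos ((K - 1) * π / K) := by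
    rw [← cos_nat_mul_two_pi_sub _ 1]
    congr 1
    push_cast
    field_simp
    ring
  have h1 : (1 : ℝ) ≤ K := by exact_mod_cast (by omega : 1 ≤ K)
  have hle : (K - 1) * π / K ≤ π := by
    rw [div_le_iff₀ hKpos]
    nlinarith [pi_pos]
  rw [geodC_ypt_add, hval, hcos, arccos_cos (by have := pi_pos; positivity) hle]

lemma castHom_emb (k : ZMod K) : ρ (emb K k) = k := by
  rw [emb, map_natCast, ZMod.natCast_zmod_val]

lemma natCast_ne_zero_zmod_two_mul : (K : ZMod (2 * K)) ≠ 0 := by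
  rw [Ne, ZMod.natCast_eq_zero_iff]
  intro h
  have := NeZero.pos K
  have := Nat.le_of_dvd this h
  omega

lemma exists_sub_eq_one_add (hK : 2 ≤ K) {A : ZMod K → ZMod (2 * K)} (hA : ∀ k, ρ (A k) = k) :
    ∃ k, A (k + 1) - A k = 1 + K := by
  by_contra! hnear
  have hstep k : A (k + 1) - A k = 1 := (sub_eq_one_or_eq_one_add hK hA k).resolve_right (hnear k)
  have htel : ∑ k : ZMod K, (A (k + 1) - A k) = 0 := by
    rw [Finset.sum_sub_distrib, sub_eq_zero]
    exact Equiv.sum_comp (Equiv.addRight 1) A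
  simp only [hstep, Finset.sum_const, Finset.card_univ, ZMod.card, nsmul_eq_mul, mul_one] at htel
  exact natCast_ne_zero_zmod_two_mul htel

lemma emb_add_one_of_ne_neg_one {k : ZMod K} (hk : k ≠ -1) : emb K (k + 1) = emb K k + 1 := by
  have hlt : k.val + 1 < K := by
    refine lt_of_le_of_ne (ZMod.val_lt k) fun h => hk ?_
    rw [eq_neg_iff_add_eq_zero, ← ZMod.natCast_zmod_val k, ← Nat.cast_add_one, h, ZMod.natCast_self]
  rw [emb, emb, ← ZMod.natCast_zmod_val k, ← Nat.cast_add_one, ZMod.val_cast_of_lt hlt,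
    ZMod.natCast_zmod_val, Nat.cast_add_one]

lemma pi_div_le_geodC_ypt_add (hK : 2 ≤ K) (a : ZMod (2 * K)) {d : ZMod (2 * K)}
    (hd : d = 1 ∨ d = 1 + K) : π / K ≤ geodC (ypt K a) (ypt K (a + d)) := by
  rcases hd with rfl | rfl
  · rw [geodC_ypt_add_one]
  · have : (1 : ℝ) ≤ K - 1 := by
      have : (2 : ℝ) ≤ K := by exact_mod_cast hK
      linarith
    rw [geodC_ypt_add_one_add hK, mul_div_assoc]
    exact le_mul_of_one_le_left (by positivity) this

lemma le_sum_geodC_ypt (hK : 2 ≤ K) {A : ZMod K → ZMod (2 * K)} (hA : ∀ k, ρ (A k) = k) :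
    2 * π * (K - 1) / K ≤ ∑ k, geodC (ypt K (A k)) (ypt K (A (k + 1))) := by
  obtain ⟨k₀, hk₀⟩ := exists_sub_eq_one_add hK hA
  calc 2 * π * (K - 1) / K
      = geodC (ypt K (A k₀)) (ypt K (A (k₀ + 1))) + (Fintype.card (ZMod K) - 1) • (π / K) := by
        rw [← add_sub_cancel (A k₀) (A (k₀ + 1)), hk₀, geodC_ypt_add_one_add hK, ZMod.card,
          nsmul_eq_mul, Nat.cast_pred (NeZero.pos K)]
        ring
    _ ≤ _ := by
      apply Fintype.add_card_sub_one_nsmul_le_sum k₀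
      intro k _
      rw [← add_sub_cancel (A k) (A (k + 1))]
      exact pi_div_le_geodC_ypt_add hK _ (sub_eq_one_or_eq_one_add hK hA k)

lemma sum_geodC_ypt_emb (hK : 2 ≤ K) :
    ∑ k, geodC (ypt K (emb K k)) (ypt K (emb K (k + 1))) = 2 * π * (K - 1) / K := by
  have hfar : emb K (-1 + 1) - emb K (-1) = 1 + K := by
    obtain ⟨k₀, hk₀⟩ := exists_sub_eq_one_add hK castHom_emb
    obtain rfl : k₀ = -1 := by
      by_contra hne
      rw [emb_add_one_of_ne_neg_one hne, add_sub_cancel_left, left_eq_add] at hk₀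
      exact natCast_ne_zero_zmod_two_mul hk₀
    exact hk₀
  rw [Fintype.sum_eq_add_card_sub_one_nsmul (-1) (c := π / K) fun k hk => by
      rw [emb_add_one_of_ne_neg_one hk, geodC_ypt_add_one],
    ← add_sub_cancel (emb K (-1)) (emb K (-1 + 1)), hfar, geodC_ypt_add_one_add hK, ZMod.card,
    nsmul_eq_mul, Nat.cast_pred (NeZero.pos K)]
  ring

lemma exists_castHom_eq_and_eq_ypt {x : ZMod K → Metric.sphere (0 : EuclideanSpace ℝ (Fin 2)) 1}
    (hx : ∀ k, x k = ypt K (emb K k) ∨ x k = ypt K (emb K k + K)) :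
    ∃ A : ZMod K → ZMod (2 * K), (∀ k, ρ (A k) = k) ∧ x = fun k => ypt K (A k) := by
  have hlabel (k : ZMod K) : ∃ a, ρ a = k ∧ x k = ypt K a := by
    rcases hx k with h | h
    · exact ⟨_, castHom_emb k, h⟩
    · exact ⟨_, by rw [map_add, castHom_emb, castHom_natCast_self, add_zero], h⟩
  choose A hA hxA using hlabel
  exact ⟨A, hA, funext hxA⟩

lemma mustar_add_one (hK : 2 ≤ K) (k : ZMod K) :
    mustar K (k + 1) = (1 / 2 : ℝ≥0∞) • (Measure.dirac (ypt K (emb K k + 1)) +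
      Measure.dirac (ypt K (emb K k + K + 1))) := by
  rw [mustar, ← add_sub_cancel (emb K k) (emb K (k + 1))]
  rcases sub_eq_one_or_eq_one_add hK castHom_emb k with h | h <;> rw [h]
  · rw [add_right_comm]
  · rw [add_comm (Measure.dirac _),
      show emb K k + (1 + K) + K = emb K k + 1 by
        linear_combination natCast_add_natCast_self_zmod_two_mul (K := K),
      ← add_assoc, add_right_comm]

lemma OTcost_mustar_le (hK : 2 ≤ K) (k : ZMod K) :
    OTcost geodC (mustar K k) (mustar K (k + 1)) ≤ π / K := by
  rw [mustar_add_one hK, mustar]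
  refine (OTcost_half_smul_dirac_add_le (c := geodC) (fun _ _ => arccos_nonneg _) _ _ _ _).trans_eq
    ?_
  rw [geodC_ypt_add_one, geodC_ypt_add_one]
  ring

lemma sum_OTcost_mustar_le (hK : 2 ≤ K) :
    ∑ k, OTcost geodC (mustar K k) (mustar K (k + 1)) ≤ π :=
  calc ∑ k, OTcost geodC (mustar K k) (mustar K (k + 1)) ≤ ∑ _k : ZMod K, π / K :=
        Finset.sum_le_sum fun k _ => OTcost_mustar_le hK k
    _ = π := by
      rw [Finset.sum_const, Finset.card_univ, ZMod.card, nsmul_eq_mul]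
      field_simp [NeZero.ne K]

end Cycle

/-- the local marginal polytope relaxation is not tight on the `K`-cycle:
(a) the minimum of `F_K` (unary indicator terms of `{y_k, y_{k+K}}`, geodesic couplings on
the cycle) is `2π(K−1)/K`, attained at `x* = (y_0, …, y_{K−1})`; (b) the measures
`μ*_k = (δ_{y_k} + δ_{y_{k+K}})/2` are feasible for the relaxation (probability measures
charging only the allowed points) with pairwise transport cost summing to at most
`π < 2π(K−1)/K`. -/
theorem stmt_16 (K : ℕ) (hK : 3 ≤ K) [NeZero K] :
    (IsLeast {r : ℝ | ∃ x : ZMod K → Metric.sphere (0 : EuclideanSpace ℝ (Fin 2)) 1,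
        (∀ k : ZMod K, x k = ypt K (emb K k) ∨
          x k = ypt K (emb K k + (K : ZMod (2 * K)))) ∧
        r = ∑ k : ZMod K, geodC (x k) (x (k + 1))}
      (2 * Real.pi * ((K : ℝ) - 1) / K)) ∧
    (∑ k : ZMod K, geodC (ypt K (emb K k)) (ypt K (emb K (k + 1))) =
      2 * Real.pi * ((K : ℝ) - 1) / K) ∧
    (∀ k : ZMod K, IsProbabilityMeasure (mustar K k)) ∧
    (∀ k : ZMod K, mustar K k
        ({ypt K (emb K k), ypt K (emb K k + (K : ZMod (2 * K)))} :
          Set (Metric.sphere (0 : EuclideanSpace ℝ (Fin 2)) 1)) = 1) ∧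
    (∑ k : ZMod K, OTcost geodC (mustar K k) (mustar K (k + 1)) ≤ Real.pi) ∧
    Real.pi < 2 * Real.pi * ((K : ℝ) - 1) / K := by
  have hK₂ : 2 ≤ K := by omega
  refine ⟨⟨⟨fun k => ypt K (emb K k), fun k => Or.inl rfl, (sum_geodC_ypt_emb hK₂).symm⟩, ?_⟩,
    sum_geodC_ypt_emb hK₂, fun k => isProbabilityMeasure_half_smul_dirac_add _ _,
    fun k => half_smul_dirac_add_apply_of_mem (Set.mem_insert _ _) (Set.mem_insert_of_mem _ rfl),
    sum_OTcost_mustar_le hK₂, ?_⟩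
  · rintro r ⟨x, hx, rfl⟩
    obtain ⟨A, hA, rfl⟩ := exists_castHom_eq_and_eq_ypt hx
    exact le_sum_geodC_ypt hK₂ hA
  · have : (3 : ℝ) ≤ K := by exact_mod_cast hK
    rw [lt_div_iff₀ (by positivity)]
    nlinarith [pi_pos]
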